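/- arXiv:1712.04051 — 2 statements merged into one kernel-verified Lean document; each statement's English description precedes it below -/
import Mathlib

section
/- Let H ∈ F_q[T] be monic squarefree of degree h with H ∉ {1, T}, and let G ∈ F_q[T] be coprime to H. Write θ = {G/H} = Σ_{j<0} θ_j T^j. Then there is no i < 0 such that θ_j = 0 for all j with i − h < j ≤ i; equivalently, the coefficient sequence of θ contains no h consecutive zeros. -/
/- Common setup: the field `F_q(T)_∞` of formal Laurent series in `1/T` is realized as
`LaurentSeries F` in the variable `X = 1/T`; the coefficient of `T^l` is the
`X`-coefficient at `-l`. -/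

noncomputable section
open Polynomial Finset Filter
open scoped Classical

/-- The element `T` of `F_q(T)_∞`. -/
def Tinf (F : Type) [Field F] : LaurentSeries F := HahnSeries.single (-1 : ℤ) (1 : F)

variable {F : Type} [Field F]

/-- The embedding of `F[T]` into `F_q(T)_∞`. -/
def toInf (G : Polynomial F) : LaurentSeries F := Polynomial.aeval (Tinf F) G

/-- The coefficient of `T^l` of an element of `F_q(T)_∞`. -/
def coeffT (θ : LaurentSeries F) (l : ℤ) : F := θ.coeff (-l)

/-- The unit interval `U = {Σ_{l<0} a_l T^l}`. -/
def UnitInt (F : Type) [Field F] : Set (LaurentSeries F) :=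
  {θ | ∀ l : ℤ, 0 ≤ l → coeffT θ l = 0}

/-- The fractional part `{β} = Σ_{l<0} β_l T^l`. -/
def lfrac (θ : LaurentSeries F) : LaurentSeries F where
  coeff m := if 0 < m then θ.coeff m else 0
  isPWO_support' := θ.isPWO_support'.mono (fun m hm => by
    simp only [Function.mem_support] at hm ⊢
    intro h; apply hm; split_ifs
    · exact h
    · rfl)

/-- The absolute value on `F_q(T)_∞`: `|Σ_{l≤k} a_l T^l| = q^k` when `a_k ≠ 0`, and `|0| = 0`. -/
def lAbs (q : ℕ) (θ : LaurentSeries F) : ℝ :=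
  if θ = 0 then 0 else (q : ℝ) ^ (-(θ.order : ℝ))

/-- The additive character `ψ(a) = exp(2πi·Tr_{F_q/F_p}(a)/p)`. -/
def psiChar (p : ℕ) [CharP F p] [Algebra (ZMod p) F] (a : F) : ℂ :=
  Complex.exp (2 * Real.pi * Complex.I * (((Algebra.trace (ZMod p) F) a).val : ℂ) / (p : ℂ))

/-- The map `e : F_q(T)_∞ → ℂ`, `e(Σ a_i T^i) = ψ(a₋₁)`. -/
def eInf (p : ℕ) [CharP F p] [Algebra (ZMod p) F] (θ : LaurentSeries F) : ℂ :=
  psiChar p (coeffT θ (-1))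

/-- The set `M_n` of monic polynomials of degree `n`. -/
def Mset (F : Type) [Field F] (n : ℕ) : Set (Polynomial F) := {P | P.Monic ∧ P.natDegree = n}

/-- The set of monic irreducible polynomials of degree `n`. -/
def PIrr (F : Type) [Field F] (n : ℕ) : Set (Polynomial F) :=
  {P | P.Monic ∧ P.natDegree = n ∧ Irreducible P}

/-- `π_q(n)`, the number of monic irreducible polynomials of degree `n` over `F_q`. -/
def piq (F : Type) [Field F] (n : ℕ) : ℕ := (PIrr F n).ncard

/-- `f(θ) = Σ_{P ∈ M_n, P irreducible} e(θP)`. -/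
def fsum (p : ℕ) [CharP F p] [Algebra (ZMod p) F] (n : ℕ) (θ : LaurentSeries F) : ℂ :=
  ∑ᶠ P ∈ PIrr F n, eInf p (toInf P * θ)

/-- The set `C` of monic degree-`n` polynomials with `b_i = a_i` for `i ∈ 𝓘` and
`b_j ∉ S_j` for `j ∈ 𝓙`. -/
def Cset (n : ℕ) (I J : Finset ℕ) (a : ℕ → F) (S : ℕ → Finset F) : Set (Polynomial F) :=
  {P | P.Monic ∧ P.natDegree = n ∧ (∀ i ∈ I, P.coeff i = a i) ∧ ∀ j ∈ J, P.coeff j ∉ S j}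

/-- The Fourier transform `F̂_{q,n}(θ) = Σ_{G ∈ M_n} 1_C(G)·e(Gθ)`. -/
def FhatC (p : ℕ) [CharP F p] [Algebra (ZMod p) F] (C : Set (Polynomial F)) (n : ℕ)
    (θ : LaurentSeries F) : ℂ :=
  ∑ᶠ G ∈ Mset F n, Set.indicator C (fun _ => (1:ℂ)) G * eInf p (toInf G * θ)

/-- `α(m)`, the sup over `i_1 < … < i_m` in `𝓙` of `Π (N_{i_j} + 1)`. -/
def alphaJ (J : Finset ℕ) (S : ℕ → Finset F) (m : ℕ) : ℕ :=
  (J.powersetCard m).sup fun s => ∏ i ∈ s, ((S i).card + 1)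

/-- `Y_h = Σ |F̂_{q,n}(G/H)|` over monic squarefree `H ∉ {1,T}` of degree `h` and `G`
coprime to `H` with `deg G < deg H`. -/
def Yh (p : ℕ) [CharP F p] [Algebra (ZMod p) F] (C : Set (Polynomial F)) (n h : ℕ) : ℝ :=
  ∑ᶠ GH ∈ {GH : Polynomial F × Polynomial F |
      GH.2.Monic ∧ Squarefree GH.2 ∧ GH.2.natDegree = h ∧ GH.2 ≠ 1 ∧ GH.2 ≠ Polynomial.X ∧
      IsCoprime GH.1 GH.2 ∧ GH.1.degree < GH.2.degree},
    ‖FhatC p C n (toInf GH.1 / toInf GH.2)‖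

/-- The constraint set `C_i`: `{a_i}` for `i ∈ 𝓘`, and `F_q \ S_i` for `i ∈ 𝓙`. -/
def Ccon (I : Finset ℕ) (a : ℕ → F) (S : ℕ → Finset F) (i : ℕ) : Set F :=
  if i ∈ I then {a i} else {b | b ∉ S i}

/-- The Fourier transform of the degree-`l` family with constraint sets `Cc 0, …, Cc (l-1)`:
`F̂_{q,l}(η) = Σ_{G ∈ M_l} (Π_{i<l} 1_{Cc i}(g_i))·e(Gη)`. -/
def FhatGen (p : ℕ) [CharP F p] [Algebra (ZMod p) F] (Cc : ℕ → Set F) (l : ℕ)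
    (θ : LaurentSeries F) : ℂ :=
  ∑ᶠ G ∈ Mset F l,
    (∏ i ∈ Finset.range l, Set.indicator (Cc i) (fun _ => (1:ℂ)) (G.coeff i)) *
      eInf p (toInf G * θ)


-- AUX

lemma tinf_pow (i : ℕ) : (Tinf F) ^ i = HahnSeries.single (-(i : ℤ)) (1 : F) := by
  rw [Tinf, HahnSeries.single_pow, one_pow]
  congr 1
  simp

lemma toInf_coeff (P : Polynomial F) (m : ℤ) :
    (toInf P).coeff m = if m ≤ 0 then P.coeff (-m).toNat else 0 := by
  rw [toInf, Polynomial.aeval_def, Polynomial.eval₂_eq_sum_range]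
  have hterm : ∀ i : ℕ, (algebraMap F (LaurentSeries F)) (P.coeff i) * Tinf F ^ i
      = HahnSeries.single (-(i : ℤ)) (P.coeff i) := by
    intro i
    rw [tinf_pow, HahnSeries.algebraMap_apply', ← PowerSeries.C_eq_algebraMap,
      HahnSeries.ofPowerSeries_C, HahnSeries.C_apply,
      HahnSeries.single_mul_single, zero_add, mul_one]
  simp only [hterm]
  have hsum := map_sum (HahnSeries.coeff.addMonoidHom m)
    (fun i : ℕ => HahnSeries.single (-(i : ℤ)) (P.coeff i)) (Finset.range (P.natDegree + 1))
  simp only [HahnSeries.coeff.addMonoidHom_apply] at hsum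
  refine hsum.trans ?_
  simp only [HahnSeries.coeff_single]
  by_cases hm : m ≤ 0
  · rw [if_pos hm, Finset.sum_eq_single ((-m).toNat)]
    · rw [if_pos (by omega)]
    · intro b _ hne
      rw [if_neg (by omega)]
    · intro hb
      rw [Finset.mem_range, not_lt] at hb
      rw [if_pos (by omega)]
      exact Polynomial.coeff_eq_zero_of_natDegree_lt (by omega)
  · rw [if_neg hm]
    apply Finset.sum_eq_zero
    intro i _
    rw [if_neg (by omega)]

lemma toInf_eq (P : Polynomial F) :
    toInf P = HahnSeries.single (-(P.natDegree : ℤ)) (1 : F) *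
      ((P.reverse : PowerSeries F) : LaurentSeries F) := by
  ext m
  have hR : (HahnSeries.single (-(P.natDegree : ℤ)) (1 : F) *
      ((P.reverse : PowerSeries F) : LaurentSeries F)).coeff m
      = ((P.reverse : PowerSeries F) : LaurentSeries F).coeff (m + P.natDegree) := by
    have h2 := HahnSeries.coeff_single_mul_add (r := (1 : F))
      (x := ((P.reverse : PowerSeries F) : LaurentSeries F))
      (a := m + P.natDegree) (b := -(P.natDegree : ℤ))
    rw [show (m + (P.natDegree : ℤ)) + (-(P.natDegree : ℤ)) = m by ring] at h2
    rw [h2, one_mul]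
  rw [hR, PowerSeries.coeff_coe, toInf_coeff]
  by_cases hm : m ≤ 0
  · rw [if_pos hm]
    by_cases hmd : m + (P.natDegree : ℤ) < 0
    · rw [if_pos hmd]
      exact Polynomial.coeff_eq_zero_of_natDegree_lt (by omega)
    · rw [if_neg hmd, Polynomial.coeff_coe, Polynomial.coeff_reverse]
      congr 1
      rw [Polynomial.revAt_le (by omega)]
      omega
  · rw [if_neg hm, if_neg (by omega), Polynomial.coeff_coe]
    refine (Polynomial.coeff_eq_zero_of_natDegree_lt ?_).symm
    have := P.reverse_natDegree_le
    omega

lemma dvd_of_reverse_dvd {p q : Polynomial F} (hp0 : p.coeff 0 ≠ 0)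
    (hdvd : p.reverse ∣ q.reverse) : p ∣ q := by
  obtain ⟨r, hr⟩ := hdvd
  have hpp : p.reverse.reverse = p := by
    have ht : p.natTrailingDegree = 0 :=
      Polynomial.natTrailingDegree_eq_zero.mpr (Or.inr hp0)
    have h2 : p.mirror = p.reverse := by
      rw [Polynomial.mirror, ht, pow_zero, mul_one]
    have h3 : (p.reverse).mirror = p.reverse.reverse := by
      rw [Polynomial.mirror, Polynomial.natTrailingDegree_reverse, pow_zero, mul_one]
    rw [← h3, ← h2, Polynomial.mirror_mirror]
  have hq : q.reverse.reverse ∣ q := by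
    refine ⟨Polynomial.X ^ q.natTrailingDegree, ?_⟩
    conv_lhs => rw [← q.mirror_mirror]
    rw [Polynomial.mirror, Polynomial.mirror_natTrailingDegree,
      Polynomial.mirror, Polynomial.reverse_mul_X_pow]
  have h1 : q.reverse.reverse = p * r.reverse := by
    rw [hr, Polynomial.reverse_mul_of_domain, hpp]
  exact dvd_trans (Dvd.intro _ h1.symm) hq

/-- Lemma: if `H ∉ {1,T}` is monic squarefree of degree `h` and `G` is coprime to `H`, then
the coefficient sequence of `θ = {G/H}` has no `h` consecutive zeros: there is no `i < 0`
such that `θ_j = 0` for all `i − h < j ≤ i`. -/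
theorem no_h_consecutive_zeros (F : Type) [Field F] (h : ℕ) (H : Polynomial F)
    (hmonic : H.Monic) (hsf : Squarefree H) (hdeg : H.natDegree = h)
    (hone : H ≠ 1) (hX : H ≠ Polynomial.X)
    (G : Polynomial F) (hcop : IsCoprime G H) :
    ¬ ∃ i : ℤ, i < 0 ∧ ∀ j : ℤ, i - (h : ℤ) < j → j ≤ i →
        coeffT (lfrac (toInf G / toInf H)) j = 0 := by
  rintro ⟨i, hi, hz⟩
  -- setup
  have hh1 : 1 ≤ h := by
    by_contra hc
    have h0 : H.natDegree = 0 := by omega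
    exact hone (hmonic.natDegree_eq_zero.mp h0)
  set gd := G.natDegree with hgd
  have hHrev0 : PowerSeries.constantCoeff (H.reverse : PowerSeries F) = 1 := by
    rw [← PowerSeries.coeff_zero_eq_constantCoeff_apply, Polynomial.coeff_coe,
      Polynomial.coeff_zero_reverse]
    exact hmonic
  set S : PowerSeries F := ((H.reverse : PowerSeries F))⁻¹ * (G.reverse : PowerSeries F)
    with hSdef
  have hHS : (H.reverse : PowerSeries F) * S = (G.reverse : PowerSeries F) := by
    rw [hSdef, ← mul_assoc, PowerSeries.mul_inv_cancel _ (by rw [hHrev0]; exact one_ne_zero),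
      one_mul]
  have hH0 : toInf H ≠ 0 := by
    intro h0
    have h1 : (toInf H).coeff (-(h : ℤ)) = 1 := by
      rw [toInf_coeff, if_pos (by omega), show ((-(-(h:ℤ))).toNat) = h by omega, ← hdeg]
      exact hmonic
    rw [h0] at h1
    simp at h1
  have hfe : toInf G / toInf H
      = HahnSeries.single ((h : ℤ) - gd) (1 : F) * ((S : PowerSeries F) : LaurentSeries F) := by
    rw [div_eq_iff hH0, toInf_eq G, toInf_eq H, hdeg, ← hgd]
    rw [show HahnSeries.single ((h : ℤ) - gd) (1 : F) * ((S : PowerSeries F) : LaurentSeries F)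
          * (HahnSeries.single (-(h : ℤ)) (1 : F) * ((H.reverse : PowerSeries F) : LaurentSeries F))
        = (HahnSeries.single ((h : ℤ) - gd) (1 : F) * HahnSeries.single (-(h : ℤ)) (1 : F))
          * (((H.reverse : PowerSeries F) : LaurentSeries F)
            * ((S : PowerSeries F) : LaurentSeries F)) by ring]
    rw [HahnSeries.single_mul_single, mul_one, show (h : ℤ) - gd + -h = -(gd : ℤ) by ring,
      ← PowerSeries.coe_mul, hHS]
  have hcoef : ∀ j : ℤ, j < 0 → coeffT (lfrac (toInf G / toInf H)) j
      = if -j - ((h : ℤ) - gd) < 0 then 0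
        else PowerSeries.coeff (-j - ((h : ℤ) - gd)).natAbs S := by
    intro j hj
    have h1 : coeffT (lfrac (toInf G / toInf H)) j = (toInf G / toInf H).coeff (-j) := by
      show (if 0 < -j then (toInf G / toInf H).coeff (-j) else 0) = _
      rw [if_pos (by omega)]
    rw [h1, hfe]
    have h2 := HahnSeries.coeff_single_mul_add (r := (1 : F))
      (x := ((S : PowerSeries F) : LaurentSeries F))
      (a := -j - ((h : ℤ) - gd)) (b := (h : ℤ) - gd)
    rw [show -j - ((h : ℤ) - gd) + ((h : ℤ) - gd) = -j by ring] at h2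
    rw [h2, one_mul, PowerSeries.coeff_coe]
  set w : ℤ := (gd : ℤ) - h - i with hw
  -- all coefficients of S from w on vanish
  have hSzero : ∀ n : ℕ, w ≤ (n : ℤ) → PowerSeries.coeff n S = 0 := by
    intro n
    induction n using Nat.strong_induction_on with
    | _ n IH =>
      intro hn
      by_cases hcase : (n : ℤ) < w + h
      · set j : ℤ := (gd : ℤ) - h - n with hj
        have hjneg : j < 0 := by omega
        have hzj := hz j (by omega) (by omega)
        rw [hcoef j hjneg, if_neg (by omega),
          show (-j - ((h : ℤ) - gd)).natAbs = n by omega] at hzj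
        exact hzj
      · have hGrev : (PowerSeries.coeff n) ((G.reverse : PowerSeries F)) = 0 := by
          rw [Polynomial.coeff_coe]
          apply Polynomial.coeff_eq_zero_of_natDegree_lt
          have := G.reverse_natDegree_le
          omega
        rw [← hHS, PowerSeries.coeff_mul] at hGrev
        rw [Finset.sum_eq_single ((0 : ℕ), n)] at hGrev
        · rw [PowerSeries.coeff_zero_eq_constantCoeff, hHrev0, one_mul] at hGrev
          exact hGrev
        · rintro ⟨a, b⟩ hp hpne
          rw [Finset.HasAntidiagonal.mem_antidiagonal] at hp
          by_cases hp1 : H.natDegree < a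
          · have hz1 : (PowerSeries.coeff a) ((H.reverse : PowerSeries F)) = 0 := by
              rw [Polynomial.coeff_coe]
              apply Polynomial.coeff_eq_zero_of_natDegree_lt
              have := H.reverse_natDegree_le
              omega
            rw [hz1, zero_mul]
          · have ha0 : a ≠ 0 := by
              intro h0
              exact hpne (by simp [h0, ← hp])
            have hb1 : b < n := by omega
            have hb2 : w ≤ (b : ℤ) := by
              rw [hdeg] at hp1
              omega
            rw [IH b hb1 hb2, mul_zero]
        · intro hnot
          exact absurd (Finset.HasAntidiagonal.mem_antidiagonal.mpr (by simp)) hnot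
  -- S is a polynomial
  set N : ℕ := w.toNat with hN
  have hP : ((S.trunc N : Polynomial F) : PowerSeries F) = S := by
    ext n
    rw [Polynomial.coeff_coe, PowerSeries.coeff_trunc]
    split_ifs with hlt
    · rfl
    · exact (hSzero n (by omega)).symm
  have hdvdrev : H.reverse ∣ G.reverse := by
    refine ⟨S.trunc N, ?_⟩
    have hcoe : ((G.reverse : Polynomial F) : PowerSeries F)
        = ((H.reverse * S.trunc N : Polynomial F) : PowerSeries F) := by
      rw [Polynomial.coe_mul, hP, hHS]
    exact (Polynomial.coe_inj.mp hcoe)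
  -- endgame
  have hfinal : ∀ H₁ : Polynomial F, H₁.Monic → H₁ ∣ H → H₁.coeff 0 ≠ 0 →
      H₁.reverse ∣ G.reverse → H₁ = 1 := by
    intro H₁ hH₁monic hH₁dvd hH₁c0 hH₁rev
    have h1 : H₁ ∣ G := dvd_of_reverse_dvd hH₁c0 hH₁rev
    have h2 : IsCoprime G H₁ := hcop.of_isCoprime_of_dvd_right hH₁dvd
    exact hH₁monic.eq_one_of_isUnit (h2.isUnit_of_dvd' h1 dvd_rfl)
  by_cases hXH : Polynomial.X ∣ H
  · obtain ⟨H₁, hH₁⟩ := hXH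
    have hH₁monic : H₁.Monic := Polynomial.monic_X.of_mul_monic_left (hH₁ ▸ hmonic)
    have hH₁c0 : H₁.coeff 0 ≠ 0 := by
      intro h0
      obtain ⟨H₂, hH₂⟩ := Polynomial.X_dvd_iff.mpr h0
      have : (Polynomial.X * Polynomial.X) ∣ H := ⟨H₂, by rw [hH₁, hH₂]; ring⟩
      exact Polynomial.not_isUnit_X (hsf _ this)
    have hH₁rev : H₁.reverse ∣ G.reverse := by
      rw [hH₁, Polynomial.reverse_X_mul] at hdvdrev
      exact hdvdrev
    have := hfinal H₁ hH₁monic ⟨Polynomial.X, by rw [hH₁]; ring⟩ hH₁c0 hH₁rev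
    rw [this, mul_one] at hH₁
    exact hX hH₁
  · have hHc0 : H.coeff 0 ≠ 0 := fun h0 => hXH (Polynomial.X_dvd_iff.mpr h0)
    exact hone (hfinal H hmonic dvd_rfl hHc0 hdvdrev)


end
end

section
/- Let 1 ≤ l ≤ n, 0 ≤ x ≤ n − l, θ ∈ U, K = {x, …, x+l−1}, K̄ = {0,…,n−1} \ K, Z_{∉K}(θ) = Z(θ) ∩ K̄, and α_{∉K}(m) = sup over i_1 < … < i_m in 𝓙 ∩ K̄ of Π_{j=1}^m (N_{i_j}+1). Write I_{∈K} = #(𝓘 ∩ K) and I_{∉K} = I − I_{∈K}. Then for every integer t with #Z_{∉K}(θ) ≤ t ≤ n − l − I_{∉K}, one has |F̂_{q,n}(θ)| ≤ α_{∉K}(n − l − I_{∉K} − t)·q^t·|F̂_{q,l}(T^x θ)|, where F̂_{q,l} is the Fourier transform of the degree-l constrained family with constraint sets C_x, …, C_{x+l−1}. -/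
/- Common setup: the field `F_q(T)_∞` of formal Laurent series in `1/T` is realized as
`LaurentSeries F` in the variable `X = 1/T`; the coefficient of `T^l` is the
`X`-coefficient at `-l`. -/

noncomputable section
open Polynomial Finset Filter
open scoped Classical

variable {F : Type} [Field F]

section Aux
set_option linter.unusedSectionVars false
variable (p : ℕ) [Fact p.Prime] [CharP F p] [Algebra (ZMod p) F]

lemma exp_nat_eq (k : ℕ) (x : ZMod p) (h : (k : ZMod p) = x) :
    Complex.exp (2 * Real.pi * Complex.I * (x.val : ℂ) / (p : ℂ)) =
    Complex.exp (2 * Real.pi * Complex.I * (k : ℂ) / (p : ℂ)) := by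
  have hp : (p : ℂ) ≠ 0 := Nat.cast_ne_zero.2 (Fact.out (p := p.Prime)).pos.ne'
  have hmod : k ≡ x.val [MOD p] := by
    apply (ZMod.natCast_eq_natCast_iff k x.val p).mp
    rw [h, ZMod.natCast_val, ZMod.cast_id]
  obtain ⟨m, hm⟩ := hmod.dvd
  have hmC : (x.val : ℂ) = (k : ℂ) + (p : ℂ) * m := by
    have := congrArg (Int.cast : ℤ → ℂ) hm.symm
    push_cast at this
    linear_combination -this
  have key : 2 * (Real.pi : ℂ) * Complex.I * (x.val : ℂ) / (p : ℂ)
      = 2 * (Real.pi : ℂ) * Complex.I * (k : ℂ) / (p : ℂ) + m * (2 * Real.pi * Complex.I) := by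
    rw [hmC]; field_simp
  rw [key, Complex.exp_add, Complex.exp_int_mul_two_pi_mul_I, mul_one]

lemma psiChar_add (a b : F) : psiChar p (a + b) = psiChar p a * psiChar p b := by
  unfold psiChar
  rw [map_add, ← Complex.exp_add]
  have h1 := exp_nat_eq p ((Algebra.trace (ZMod p) F a).val + (Algebra.trace (ZMod p) F b).val)
    (Algebra.trace (ZMod p) F a + Algebra.trace (ZMod p) F b)
    (by push_cast [ZMod.natCast_val, ZMod.cast_id]; ring)
  rw [h1]
  have hp : (p : ℂ) ≠ 0 := Nat.cast_ne_zero.2 (Fact.out (p := p.Prime)).pos.ne'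
  congr 1
  push_cast
  field_simp

lemma psiChar_zero : psiChar p (0 : F) = 1 := by
  unfold psiChar
  simp

lemma abs_psiChar (a : F) : ‖psiChar p a‖ = 1 := by
  unfold psiChar
  have : 2 * (Real.pi : ℂ) * Complex.I * (((Algebra.trace (ZMod p) F) a).val : ℂ) / (p : ℂ)
      = ((2 * Real.pi * ((Algebra.trace (ZMod p) F) a).val / (p : ℝ) : ℝ) : ℂ) * Complex.I := by
    push_cast; ring
  rw [this, Complex.norm_exp_ofReal_mul_I]

lemma psiChar_ne_one (a : F) (h : Algebra.trace (ZMod p) F a ≠ 0) : psiChar p a ≠ 1 := by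
  have hp : (p : ℂ) ≠ 0 := Nat.cast_ne_zero.2 (Fact.out (p := p.Prime)).pos.ne'
  unfold psiChar
  intro hc
  obtain ⟨m, hm⟩ := Complex.exp_eq_one_iff.mp hc
  set v := (Algebra.trace (ZMod p) F a).val with hv
  have h2 : (2 * (Real.pi:ℂ) * Complex.I) ≠ 0 := by
    simp [Real.pi_ne_zero, Complex.I_ne_zero, Complex.ofReal_ne_zero]
  have : (v : ℂ) = m * p := by
    field_simp at hm
    have := hm
    -- 2 * π * I * v = m * (2 * π * I) * p
    have h3 : (2 * (Real.pi:ℂ) * Complex.I) * (v : ℂ) = (2 * (Real.pi:ℂ) * Complex.I) * ((m : ℂ) * p) := by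
      linear_combination (2 * (Real.pi:ℂ) * Complex.I) * this
    exact mul_left_cancel₀ h2 h3
  have hz : (v : ℤ) = m * p := by exact_mod_cast this
  have hdvd : (p:ℤ) ∣ (v : ℤ) := ⟨m, by linarith [hz]⟩
  have : (p:ℕ) ∣ v := Int.ofNat_dvd.mp (by exact_mod_cast hdvd)
  have hvlt : v < p := ZMod.val_lt _
  exact h ((ZMod.val_eq_zero _).mp (Nat.eq_zero_of_dvd_of_lt this hvlt))

variable [Fintype F]

lemma trace_nondeg {w : F} (hw : w ≠ 0) : ∃ b, Algebra.trace (ZMod p) F (w * b) ≠ 0 := by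
  have h : p = ringChar F := (ringChar.eq F p).symm
  subst h
  exact FiniteField.trace_to_zmod_nondegenerate F hw

lemma sum_psiChar_mul_eq_zero (w : F) (hw : w ≠ 0) : ∑ g : F, psiChar p (g * w) = 0 := by
  obtain ⟨b, hb⟩ := trace_nondeg p hw
  have hne : psiChar p (b * w) ≠ 1 := psiChar_ne_one p _ (by rwa [mul_comm])
  have hS : ∑ g : F, psiChar p (g * w) = (∑ g : F, psiChar p (g * w)) * psiChar p (b * w) := by
    conv_lhs => rw [← Equiv.sum_comp (Equiv.addRight b) (fun g => psiChar p (g * w))]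
    simp only [Equiv.coe_addRight, add_mul, psiChar_add, ← Finset.sum_mul]
  have h0 : (∑ g : F, psiChar p (g * w)) * (1 - psiChar p (b * w)) = 0 := by
    rw [mul_sub, mul_one, ← hS, sub_self]
  rcases mul_eq_zero.mp h0 with h | h
  · exact h
  · exact absurd (by linear_combination -h) hne

def Afac (Cc : Set F) (w : F) : ℂ :=
  ∑ g : F, Set.indicator Cc (fun _ => (1:ℂ)) g * psiChar p (g * w)

lemma Afac_singleton (a w : F) : Afac p ({a} : Set F) w = psiChar p (a * w) := by
  rw [Afac]
  have h : ∀ g : F, Set.indicator ({a} : Set F) (fun _ => (1:ℂ)) g * psiChar p (g * w)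
      = if g = a then psiChar p (g * w) else 0 := by
    intro g; by_cases h : g = a <;> simp [Set.indicator_apply, h]
  simp_rw [h]
  simp

lemma Afac_compl_eq (S : Finset F) (w : F) :
    Afac p ({b | b ∉ S} : Set F) w = (∑ g : F, psiChar p (g * w)) - ∑ g ∈ S, psiChar p (g * w) := by
  rw [Afac]
  have h : ∀ g : F, Set.indicator ({b | b ∉ S} : Set F) (fun _ => (1:ℂ)) g * psiChar p (g * w)
      = psiChar p (g * w) - (if g ∈ S then psiChar p (g * w) else 0) := by
    intro g; by_cases h : g ∈ S <;> simp [Set.indicator_apply, h]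
  simp_rw [h, Finset.sum_sub_distrib, Finset.sum_ite_mem, Finset.univ_inter]

lemma abs_Afac_compl_le_card (S : Finset F) (w : F) :
    ‖Afac p ({b | b ∉ S} : Set F) w‖ ≤ Fintype.card F := by
  by_cases hw : w = 0
  · subst hw
    have h1 : ∀ g : F, psiChar p (g * 0) = 1 := by
      intro g; rw [mul_zero, psiChar_zero]
    rw [Afac_compl_eq]
    simp only [h1, Finset.sum_const, Finset.card_univ, nsmul_eq_mul, mul_one]
    rw [← Nat.cast_sub (Finset.card_le_univ S)]
    rw [Complex.norm_natCast]
    exact_mod_cast Nat.sub_le _ _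
  · rw [Afac_compl_eq, sum_psiChar_mul_eq_zero p w hw, zero_sub, norm_neg]
    calc ‖∑ g ∈ S, psiChar p (g * w)‖ ≤ ∑ g ∈ S, ‖psiChar p (g * w)‖ :=
          norm_sum_le _ _
      _ = S.card := by simp [abs_psiChar]
      _ ≤ Fintype.card F := by exact_mod_cast Finset.card_le_univ S

lemma abs_Afac_compl_le_of_ne (S : Finset F) (w : F) (hw : w ≠ 0) :
    ‖Afac p ({b | b ∉ S} : Set F) w‖ ≤ S.card := by
  rw [Afac_compl_eq, sum_psiChar_mul_eq_zero p w hw, zero_sub, norm_neg]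
  calc ‖∑ g ∈ S, psiChar p (g * w)‖ ≤ ∑ g ∈ S, ‖psiChar p (g * w)‖ :=
        norm_sum_le _ _
    _ = S.card := by simp [abs_psiChar]


def polyOf (l : ℕ) (c : Fin l → F) : Polynomial F :=
  X ^ l + ∑ i : Fin l, C (c i) * X ^ (i : ℕ)

lemma coeff_polyOf (l : ℕ) (c : Fin l → F) (k : ℕ) :
    (polyOf l c).coeff k = (if k = l then 1 else 0) + (if h : k < l then c ⟨k, h⟩ else 0) := by
  rw [polyOf, coeff_add, coeff_X_pow, finset_sum_coeff]
  congr 1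
  simp_rw [coeff_C_mul, coeff_X_pow]
  split_ifs with h
  · rw [Finset.sum_eq_single (⟨k, h⟩ : Fin l)]
    · simp
    · intro i _ hi
      have : k ≠ (i : ℕ) := fun he => hi (by simp [Fin.ext_iff, ← he])
      simp [this, mul_ite]
    · simp
  · apply Finset.sum_eq_zero
    intro i _
    have hik : k ≠ (i : ℕ) := by have := i.isLt; omega
    simp [hik]

lemma polyOf_monic (l : ℕ) (c : Fin l → F) : (polyOf l c).Monic := by
  apply monic_X_pow_add
  refine lt_of_le_of_lt (degree_sum_le _ _) ?_
  rw [Finset.sup_lt_iff (by exact_mod_cast WithBot.bot_lt_coe l)]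
  intro i _
  exact lt_of_le_of_lt (degree_C_mul_X_pow_le _ _) (by exact_mod_cast i.isLt)

lemma polyOf_natDegree (l : ℕ) (c : Fin l → F) : (polyOf l c).natDegree = l := by
  apply natDegree_eq_of_degree_eq_some
  rw [polyOf]
  rw [degree_add_eq_left_of_degree_lt, degree_X_pow]
  rw [degree_X_pow]
  refine lt_of_le_of_lt (degree_sum_le _ _) ?_
  rw [Finset.sup_lt_iff (by exact_mod_cast WithBot.bot_lt_coe l)]
  intro i _
  exact lt_of_le_of_lt (degree_C_mul_X_pow_le _ _) (by exact_mod_cast i.isLt)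

lemma polyOf_coeff_lt (l : ℕ) (c : Fin l → F) (i : Fin l) : (polyOf l c).coeff i = c i := by
  rw [coeff_polyOf]
  rw [dif_pos i.isLt, if_neg (by omega)]
  simp

lemma polyOf_injective (l : ℕ) : Function.Injective (polyOf (F := F) l) := by
  intro c c' h
  funext i
  rw [← polyOf_coeff_lt l c i, ← polyOf_coeff_lt l c' i, h]

lemma polyOf_surj (l : ℕ) (P : Polynomial F) (hm : P.Monic) (hd : P.natDegree = l) :
    polyOf l (fun i => P.coeff i) = P := by
  ext k
  rw [coeff_polyOf]
  rcases lt_trichotomy k l with h | h | h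
  · rw [if_neg (by omega), dif_pos h, zero_add]
  · subst h
    rw [if_pos rfl, dif_neg (by omega), add_zero]
    exact (hd ▸ hm.coeff_natDegree).symm
  · rw [if_neg (by omega), dif_neg (by omega), add_zero]
    exact (coeff_eq_zero_of_natDegree_lt (hd ▸ h)).symm

lemma Mset_eq_image (l : ℕ) :
    Mset F l = ↑((Finset.univ : Finset (Fin l → F)).image (polyOf l)) := by
  ext P
  simp only [Mset, Set.mem_setOf_eq, Finset.coe_image, Finset.coe_univ, Set.image_univ,
    Set.mem_range]
  constructor
  · rintro ⟨hm, hd⟩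
    exact ⟨fun i => P.coeff i, polyOf_surj l P hm hd⟩
  · rintro ⟨c, rfl⟩
    exact ⟨polyOf_monic l c, polyOf_natDegree l c⟩

lemma psiChar_sum {ι : Type*} (s : Finset ι) (f : ι → F) :
    psiChar p (∑ i ∈ s, f i) = ∏ i ∈ s, psiChar p (f i) := by
  induction s using Finset.cons_induction with
  | empty => simpa using psiChar_zero p
  | cons a s ha ih => rw [Finset.sum_cons, Finset.prod_cons, psiChar_add, ih]

lemma toInf_polyOf_mul_coeff (l : ℕ) (c : Fin l → F) (θ : LaurentSeries F) :
    (toInf (polyOf l c) * θ).coeff (1 : ℤ) =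
      θ.coeff (1 + l) + ∑ i : Fin l, c i * θ.coeff (1 + (i : ℕ)) := by
  have hT : ∀ m : ℕ, (Tinf F) ^ m = HahnSeries.single (-(m : ℤ)) (1 : F) := by
    intro m; rw [Tinf, HahnSeries.single_pow, one_pow]; congr 1; simp
  have key : ∀ m : ℕ, ((Tinf F) ^ m * θ).coeff (1 : ℤ) = θ.coeff (1 + m) := by
    intro m
    rw [hT m]
    have h1 : (1 + (m : ℤ)) + (-(m : ℤ)) = 1 := by ring
    calc (HahnSeries.single (-(m : ℤ)) (1 : F) * θ).coeff (1 : ℤ)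
        = (HahnSeries.single (-(m : ℤ)) (1 : F) * θ).coeff ((1 + (m : ℤ)) + (-(m : ℤ))) := by
          rw [h1]
      _ = θ.coeff (1 + m) := by rw [HahnSeries.coeff_single_mul_add, one_mul]
  have h1 : toInf (polyOf l c) = (Tinf F) ^ l +
      ∑ i : Fin l, HahnSeries.single (0 : ℤ) (c i) * (Tinf F) ^ (i : ℕ) := by
    rw [toInf, polyOf, map_add, map_sum, map_pow, aeval_X]
    refine congrArg _ (Finset.sum_congr rfl fun i _ => ?_)
    rw [map_mul, aeval_C, map_pow, aeval_X]
    congr 1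
    rw [HahnSeries.algebraMap_apply']
    simp [PowerSeries.algebraMap_apply]
  have hsum : ∀ (s : Finset (Fin l)) (f : Fin l → LaurentSeries F),
      (∑ i ∈ s, f i).coeff (1 : ℤ) = ∑ i ∈ s, (f i).coeff (1 : ℤ) := by
    intro s f
    induction s using Finset.cons_induction with
    | empty => simp
    | cons a s ha ih => rw [Finset.sum_cons, Finset.sum_cons, HahnSeries.coeff_add, ih]
  rw [h1, add_mul, Finset.sum_mul, HahnSeries.coeff_add, hsum]
  congr 1
  · exact key l
  · refine Finset.sum_congr rfl fun i _ => ?_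
    rw [mul_assoc, HahnSeries.coeff_single_zero_mul, key i]

lemma FhatGen_factor (Cc : ℕ → Set F) (l : ℕ) (θ : LaurentSeries F) :
    FhatGen p Cc l θ = psiChar p (θ.coeff (1 + l)) *
      ∏ i ∈ Finset.range l, Afac p (Cc i) (θ.coeff (1 + (i : ℕ))) := by
  rw [FhatGen, Mset_eq_image l, finsum_mem_coe_finset,
    Finset.sum_image (fun c _ c' _ h => polyOf_injective l h)]
  have hstep : ∀ c : Fin l → F,
      (∏ i ∈ Finset.range l, Set.indicator (Cc i) (fun _ => (1:ℂ)) ((polyOf l c).coeff i)) *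
        eInf p (toInf (polyOf l c) * θ)
      = psiChar p (θ.coeff (1 + l)) *
        ∏ i : Fin l, (Set.indicator (Cc (i : ℕ)) (fun _ => (1:ℂ)) (c i) *
          psiChar p (c i * θ.coeff (1 + (i : ℕ)))) := by
    intro c
    have hprod : (∏ i ∈ Finset.range l, Set.indicator (Cc i) (fun _ => (1:ℂ))
          ((polyOf l c).coeff i))
        = ∏ i : Fin l, Set.indicator (Cc (i : ℕ)) (fun _ => (1:ℂ)) (c i) := by
      rw [← Fin.prod_univ_eq_prod_range
        (fun i => Set.indicator (Cc i) (fun _ => (1:ℂ)) ((polyOf l c).coeff i)) l]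
      exact Finset.prod_congr rfl fun i _ => by rw [polyOf_coeff_lt]
    have hco : coeffT (toInf (polyOf l c) * θ) (-1) = (toInf (polyOf l c) * θ).coeff 1 := by
      rw [coeffT]; norm_num
    have heinf : eInf p (toInf (polyOf l c) * θ)
        = psiChar p (θ.coeff (1 + l)) * ∏ i : Fin l, psiChar p (c i * θ.coeff (1 + (i : ℕ))) := by
      rw [eInf, hco, toInf_polyOf_mul_coeff, psiChar_add, psiChar_sum]
    rw [hprod, heinf, Finset.prod_mul_distrib]
    ring
  simp_rw [hstep]
  rw [← Finset.mul_sum]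
  congr 1
  have hps := Finset.prod_univ_sum (fun _ : Fin l => (Finset.univ : Finset F))
    (fun (i : Fin l) (g : F) => Set.indicator (Cc (i : ℕ)) (fun _ => (1:ℂ)) g *
      psiChar p (g * θ.coeff (1 + (i : ℕ))))
  rw [Fintype.piFinset_univ] at hps
  rw [← hps, ← Fin.prod_univ_eq_prod_range (fun i => Afac p (Cc i) (θ.coeff (1 + (i : ℕ)))) l]
  rfl

lemma abs_FhatGen (Cc : ℕ → Set F) (l : ℕ) (θ : LaurentSeries F) :
    ‖FhatGen p Cc l θ‖
      = ∏ i ∈ Finset.range l, ‖Afac p (Cc i) (θ.coeff (1 + (i : ℕ)))‖ := by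
  rw [FhatGen_factor, norm_mul, abs_psiChar, one_mul, norm_prod]

lemma pow_Tinf_mul_coeff (x : ℕ) (θ : LaurentSeries F) (g : ℤ) :
    ((Tinf F) ^ x * θ).coeff g = θ.coeff (g + x) := by
  have hT : (Tinf F) ^ x = HahnSeries.single (-(x : ℤ)) (1 : F) := by
    rw [Tinf, HahnSeries.single_pow, one_pow]; congr 1; simp
  have h1 : (g + (x : ℤ)) + (-(x : ℤ)) = g := by ring
  calc ((Tinf F) ^ x * θ).coeff g
      = (HahnSeries.single (-(x : ℤ)) (1 : F) * θ).coeff ((g + (x : ℤ)) + (-(x : ℤ))) := by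
        rw [hT, h1]
    _ = θ.coeff (g + x) := by rw [HahnSeries.coeff_single_mul_add, one_mul]

end Aux

/-- Lemma: for `1 ≤ l ≤ n`, `0 ≤ x ≤ n − l`, `θ ∈ U`, `K = {x,…,x+l−1}`, and every integer
`t` with `#Z_{∉K}(θ) ≤ t ≤ n − l − I_{∉K}`,
`|F̂_{q,n}(θ)| ≤ α_{∉K}(n − l − I_{∉K} − t)·q^t·|F̂_{q,l}(T^x θ)|`. -/
theorem fhat_window_bound_t (F : Type) [Field F] [Fintype F]
    (p : ℕ) [Fact p.Prime] [CharP F p] [Algebra (ZMod p) F]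
    (q : ℕ) (hq : q = Fintype.card F)
    (n : ℕ) (hn : 2 ≤ n) (I J : Finset ℕ)
    (hdisj : Disjoint I J) (hunion : I ∪ J = Finset.range n)
    (a : ℕ → F) (S : ℕ → Finset F)
    (l x : ℕ) (hl1 : 1 ≤ l) (hln : l ≤ n) (hx : x ≤ n - l)
    (θ : LaurentSeries F) (hθ : θ ∈ UnitInt F)
    (t : ℕ)
    (ht1 : ((J \ Finset.Ico x (x + l)).filter
        (fun i : ℕ => coeffT θ (-(i : ℤ) - 1) = 0)).card ≤ t)
    (ht2 : t + l + (I \ Finset.Ico x (x + l)).card ≤ n) :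
    ‖FhatGen p (Ccon I a S) n θ‖ ≤
      (alphaJ (J \ Finset.Ico x (x + l)) S
          (n - l - (I \ Finset.Ico x (x + l)).card - t) : ℝ) *
        (q : ℝ) ^ t *
        ‖FhatGen p (fun i => Ccon I a S (x + i)) l ((Tinf F) ^ x * θ)‖ := by
  subst hq
  set K := Finset.Ico x (x + l) with hK
  set f : ℕ → ℝ := fun i => ‖Afac p (Ccon I a S i) (θ.coeff (1 + (i : ℤ)))‖ with hf
  have hfnn : ∀ i, 0 ≤ f i := fun i => norm_nonneg _
  -- LHS as a product
  have hLHS : ‖FhatGen p (Ccon I a S) n θ‖ = ∏ i ∈ Finset.range n, f i :=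
    abs_FhatGen p (Ccon I a S) n θ
  -- RHS Fourier factor as a product over K
  have hRHS : ‖FhatGen p (fun i => Ccon I a S (x + i)) l ((Tinf F) ^ x * θ)‖
      = ∏ i ∈ K, f i := by
    rw [abs_FhatGen]
    rw [hK, Finset.prod_Ico_eq_prod_range]
    have hll : x + l - x = l := by omega
    rw [hll]
    refine Finset.prod_congr rfl fun i _ => ?_
    rw [pow_Tinf_mul_coeff]
    congr 2
    push_cast
    ring
  have hKsub : K ⊆ Finset.range n := by
    intro i hi
    rw [hK, Finset.mem_Ico] at hi
    rw [Finset.mem_range]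
    omega
  have hsplit : Finset.range n \ K = (I \ K) ∪ (J \ K) := by
    rw [← hunion, Finset.union_sdiff_distrib]
  have hdisj2 : Disjoint (I \ K) (J \ K) :=
    Finset.disjoint_of_subset_left (Finset.sdiff_subset)
      (Finset.disjoint_of_subset_right (Finset.sdiff_subset) hdisj)
  -- product over I \ K is 1
  have hIprod : ∏ i ∈ I \ K, f i = 1 := by
    refine Finset.prod_eq_one fun i hi => ?_
    have hiI : i ∈ I := (Finset.mem_sdiff.mp hi).1
    rw [hf]
    simp only
    rw [Ccon, if_pos hiI, Afac_singleton, abs_psiChar]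
  -- cardinalities
  have hKcard : K.card = l := by rw [hK, Nat.card_Ico]; omega
  have hsdcard : (Finset.range n \ K).card = n - l := by
    rw [Finset.card_sdiff_of_subset hKsub, Finset.card_range, hKcard]
  have hcards : (I \ K).card + (J \ K).card = n - l := by
    rw [← Finset.card_union_of_disjoint hdisj2, ← hsplit, hsdcard]
  -- the zero set
  set Z := (J \ K).filter (fun i : ℕ => θ.coeff (1 + (i : ℤ)) = 0) with hZ
  have hZt : Z.card ≤ t := by
    refine le_trans (le_of_eq ?_) ht1
    apply congrArg Finset.card
    refine Finset.filter_congr fun i _ => ?_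
    rw [coeffT]
    constructor <;> intro h <;> (convert h using 2; ring)
  have htJ : t ≤ (J \ K).card := by omega
  obtain ⟨W, hZW, hWJ, hWcard⟩ :=
    Finset.exists_subsuperset_card_eq (Finset.filter_subset _ _ : Z ⊆ J \ K) hZt htJ
  -- bound over W
  have hWbound : ∏ i ∈ W, f i ≤ (Fintype.card F : ℝ) ^ t := by
    rw [← hWcard, ← Finset.prod_const]
    refine Finset.prod_le_prod (fun i _ => hfnn i) (fun i hi => ?_)
    have hiJ : i ∈ J := (Finset.mem_sdiff.mp (hWJ hi)).1
    have hiI : i ∉ I := fun h => (Finset.disjoint_left.mp hdisj h) hiJ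
    rw [hf]; simp only
    rw [Ccon, if_neg hiI]
    exact abs_Afac_compl_le_card p (S i) _
  -- bound over (J \ K) \ W
  have hRbound : ∏ i ∈ (J \ K) \ W, f i ≤ ∏ i ∈ (J \ K) \ W, (((S i).card + 1 : ℕ) : ℝ) := by
    refine Finset.prod_le_prod (fun i _ => hfnn i) (fun i hi => ?_)
    have hiJK : i ∈ J \ K := (Finset.mem_sdiff.mp hi).1
    have hiW : i ∉ W := (Finset.mem_sdiff.mp hi).2
    have hiJ : i ∈ J := (Finset.mem_sdiff.mp hiJK).1
    have hiI : i ∉ I := fun h => (Finset.disjoint_left.mp hdisj h) hiJ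
    have hne : θ.coeff (1 + (i : ℤ)) ≠ 0 := by
      intro h0
      exact hiW (hZW (Finset.mem_filter.mpr ⟨hiJK, h0⟩))
    rw [hf]; simp only
    rw [Ccon, if_neg hiI]
    refine le_trans (abs_Afac_compl_le_of_ne p (S i) _ hne) ?_
    push_cast
    linarith
  have hmcard : ((J \ K) \ W).card = n - l - (I \ K).card - t := by
    rw [Finset.card_sdiff_of_subset hWJ, hWcard]
    omega
  have halpha : ∏ i ∈ (J \ K) \ W, (((S i).card + 1 : ℕ) : ℝ)
      ≤ (alphaJ (J \ K) S (n - l - (I \ K).card - t) : ℝ) := by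
    rw [← Nat.cast_prod, Nat.cast_le, alphaJ]
    have hmem : (J \ K) \ W ∈ (J \ K).powersetCard (n - l - (I \ K).card - t) := by
      rw [Finset.mem_powersetCard]
      exact ⟨Finset.sdiff_subset, hmcard⟩
    exact Finset.le_sup (f := fun s => ∏ i ∈ s, ((S i).card + 1)) hmem
  -- assemble
  have hJprod : ∏ i ∈ J \ K, f i
      ≤ (alphaJ (J \ K) S (n - l - (I \ K).card - t) : ℝ) * (Fintype.card F : ℝ) ^ t := by
    rw [← Finset.prod_sdiff hWJ]
    exact mul_le_mul (le_trans hRbound halpha) hWbound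
      (Finset.prod_nonneg fun i _ => hfnn i) (Nat.cast_nonneg _)
  have hmain : ∏ i ∈ Finset.range n \ K, f i
      ≤ (alphaJ (J \ K) S (n - l - (I \ K).card - t) : ℝ) * (Fintype.card F : ℝ) ^ t := by
    rw [hsplit, Finset.prod_union hdisj2, hIprod, one_mul]
    exact hJprod
  rw [hLHS, hRHS, ← Finset.prod_sdiff hKsub]
  exact mul_le_mul_of_nonneg_right hmain (Finset.prod_nonneg fun i _ => hfnn i)

end
end
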